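/- For all θ ∈ ℝ and ω ∈ {−ω₀, ω₀}, the stationary density satisfies the integrated stationary equation (1/2)·∂θq(θ, ω) = q(θ, ω)·(⟨J∗q⟩_μ(θ) + ω) + κ(ω), where κ(ω) = (1 − exp(4πω))/(2·Z(ω, 2Kr)). -/

import Mathlib

noncomputable section

open MeasureTheory

/-- `G u ω x = x·cos u + 2ωu`. -/
def G (u ω x : ℝ) : ℝ := x * Real.cos u + 2 * ω * u

/-- The unnormalized stationary profile `S(θ, ω, x)`. -/
def S (θ ω x : ℝ) : ℝ :=
  Real.exp (G θ ω x) *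
    ((1 - Real.exp (4 * Real.pi * ω)) * (∫ u in (0:ℝ)..θ, Real.exp (-(G u ω x))) +
      Real.exp (4 * Real.pi * ω) * (∫ u in (0:ℝ)..(2 * Real.pi), Real.exp (-(G u ω x))))

/-- The normalization constant `Z(ω, x)`. -/
def Z (ω x : ℝ) : ℝ := ∫ θ in (0:ℝ)..(2 * Real.pi), S θ ω x

/-- `Ψ_μ` for the binary disorder law `μ = (1/2)(δ_{-ω₀} + δ_{ω₀})`. -/
def psiMu (ω₀ x : ℝ) : ℝ :=
  (1 / 2) * ((∫ θ in (0:ℝ)..(2 * Real.pi), Real.cos θ * S θ (-ω₀) x) / Z (-ω₀) x +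
    (∫ θ in (0:ℝ)..(2 * Real.pi), Real.cos θ * S θ ω₀ x) / Z ω₀ x)

/-- The stationary density `q(θ, ω) = S(θ, ω, 2Kr)/Z(ω, 2Kr)`. -/
def q (K r θ ω : ℝ) : ℝ := S θ ω (2 * K * r) / Z ω (2 * K * r)

/-- `κ(ω) = (1 − exp(4πω))/(2 Z(ω, 2Kr))`. -/
def kap (K r ω : ℝ) : ℝ := (1 - Real.exp (4 * Real.pi * ω)) / (2 * Z ω (2 * K * r))

/-- The averaged convolution `⟨J∗h⟩_μ(θ)` for binary disorder. -/
def Jconv (K ω₀ : ℝ) (h : ℝ → ℝ → ℝ) (θ : ℝ) : ℝ :=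
  -(K / 2) * ((∫ φ in (0:ℝ)..(2 * Real.pi), Real.sin φ * h (θ - φ) (-ω₀)) +
    (∫ φ in (0:ℝ)..(2 * Real.pi), Real.sin φ * h (θ - φ) ω₀))

/-- The linearized evolution operator `L` around the stationary density `q`. -/
def Lop (K ω₀ r : ℝ) (h : ℝ → ℝ → ℝ) (θ ω : ℝ) : ℝ :=
  (1 / 2) * deriv (deriv (fun u => h u ω)) θ -
    deriv (fun u => h u ω * (Jconv K ω₀ (q K r) u + ω) + q K r u ω * Jconv K ω₀ h u) θ

/-! The profile `S` is built by variation of constants, so it solves the linear ODE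
`S' = (2ω - x sin θ) S + (1 - e^{4πω})`; dividing by `Z` gives the equation for `q` once
the mean field is identified as `⟨J∗q⟩_μ(θ) = -K r sin θ`. Convolving with `sin` only sees
the first Fourier moments of `q`: the cosine moments average to `r` by the fixed-point
relation, and the sine moments of `ω₀` and `-ω₀` cancel because `θ ↦ 2π - θ`, `ω ↦ -ω` is
a symmetry of `S` up to the factor `e^{4πω}`, which is also the ratio of the
normalizations `Z`. -/

open Real Function

lemma integral_sin_mul_comp_sub {f : ℝ → ℝ} (hf : Continuous f) (hper : Periodic f (2 * π))
    (θ : ℝ) :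
    (∫ φ in (0:ℝ)..2 * π, sin φ * f (θ - φ)) =
      sin θ * (∫ u in (0:ℝ)..2 * π, cos u * f u) -
        cos θ * ∫ u in (0:ℝ)..2 * π, sin u * f u := by
  have hper' : Periodic (fun u => sin (θ - u) * f u) (2 * π) := fun u => by
    simp only [hper u, show θ - (u + 2 * π) = θ - u - 2 * π by ring, sin_sub_two_pi]
  calc (∫ φ in (0:ℝ)..2 * π, sin φ * f (θ - φ))
      = ∫ u in θ - 2 * π..θ - 0, sin (θ - u) * f u := by
        rw [← intervalIntegral.integral_comp_sub_left (fun u => sin (θ - u) * f u) θ]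
        simp
    _ = ∫ u in (0:ℝ)..2 * π, sin θ * (cos u * f u) - cos θ * (sin u * f u) := by
        rw [show θ - 0 = θ - 2 * π + 2 * π by ring,
          hper'.intervalIntegral_add_eq (θ - 2 * π) 0, zero_add]
        simp only [sin_sub]
        congr 1 with u
        ring
    _ = _ := by
        rw [intervalIntegral.integral_sub, intervalIntegral.integral_const_mul,
          intervalIntegral.integral_const_mul] <;>
        exact Continuous.intervalIntegrable (by fun_prop) _ _

lemma integral_comp_two_pi_sub (f : ℝ → ℝ) :
    (∫ θ in (0:ℝ)..2 * π, f (2 * π - θ)) = ∫ θ in (0:ℝ)..2 * π, f θ := by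
  simp

lemma hasDerivAt_G (ω x θ : ℝ) : HasDerivAt (fun t => G t ω x) (2 * ω - x * sin θ) θ := by
  refine (((hasDerivAt_cos θ).const_mul x).add
    ((hasDerivAt_id' θ).const_mul (2 * ω))).congr_deriv ?_
  ring

lemma G_add_two_pi (ω x u : ℝ) : G (u + 2 * π) ω x = G u ω x + 4 * π * ω := by
  simp only [G, cos_add_two_pi]
  ring

lemma G_neg (ω x u : ℝ) : G (-u) ω x = G u (-ω) x := by
  simp only [G, cos_neg]
  ring

lemma continuous_exp_neg_G (ω x : ℝ) : Continuous fun u => exp (-G u ω x) := by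
  unfold G
  fun_prop

lemma intervalIntegrable_exp_neg_G (ω x a b : ℝ) :
    IntervalIntegrable (fun u => exp (-G u ω x)) volume a b :=
  (continuous_exp_neg_G ω x).intervalIntegrable a b

lemma integral_exp_neg_G_add_two_pi (ω x θ : ℝ) :
    (∫ u in (0:ℝ)..θ + 2 * π, exp (-G u ω x)) =
      (∫ u in (0:ℝ)..2 * π, exp (-G u ω x)) +
        exp (-(4 * π * ω)) * ∫ u in (0:ℝ)..θ, exp (-G u ω x) := by
  rw [← intervalIntegral.integral_add_adjacent_intervals
    (intervalIntegrable_exp_neg_G ω x 0 (2 * π)) (intervalIntegrable_exp_neg_G ω x _ _)]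
  have hshift := intervalIntegral.integral_comp_add_right (fun u => exp (-G u ω x)) (2 * π)
    (a := 0) (b := θ)
  rw [zero_add] at hshift
  simp only [← hshift, G_add_two_pi, neg_add, exp_add, intervalIntegral.integral_mul_const]
  ring

lemma integral_exp_neg_G_neg (ω x θ : ℝ) :
    (∫ u in (0:ℝ)..-θ, exp (-G u ω x)) = -∫ u in (0:ℝ)..θ, exp (-G u (-ω) x) := by
  simp only [← G_neg]
  rw [intervalIntegral.integral_comp_neg (fun u => exp (-G u ω x)), neg_zero,
    intervalIntegral.integral_symm]

lemma integral_exp_neg_G_period (ω x : ℝ) :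
    (∫ u in (0:ℝ)..2 * π, exp (-G u ω x)) =
      exp (-(4 * π * ω)) * ∫ u in (0:ℝ)..2 * π, exp (-G u (-ω) x) := by
  have h := integral_exp_neg_G_add_two_pi ω x (-(2 * π))
  rw [neg_add_cancel, integral_exp_neg_G_neg, intervalIntegral.integral_same] at h
  linarith

lemma hasDerivAt_S (ω x θ : ℝ) :
    HasDerivAt (fun t => S t ω x)
      ((2 * ω - x * sin θ) * S θ ω x + (1 - exp (4 * π * ω))) θ := by
  have hF := intervalIntegral.integral_hasDerivAt_right (intervalIntegrable_exp_neg_G ω x 0 θ)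
    ((continuous_exp_neg_G ω x).stronglyMeasurableAtFilter _ _)
    (continuous_exp_neg_G ω x).continuousAt
  refine ((hasDerivAt_G ω x θ).exp.mul ((hF.const_mul (1 - exp (4 * π * ω))).add_const
    (exp (4 * π * ω) * ∫ u in (0:ℝ)..2 * π, exp (-G u ω x)))).congr_deriv ?_
  rw [S, exp_neg]
  field_simp

lemma continuous_S (ω x : ℝ) : Continuous fun θ => S θ ω x :=
  continuous_iff_continuousAt.2 fun θ => (hasDerivAt_S ω x θ).continuousAt

lemma S_pos (ω x : ℝ) {θ : ℝ} (h₀ : 0 < θ) (h₂π : θ < 2 * π) : 0 < S θ ω x := by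
  have hsplit : (1 - exp (4 * π * ω)) * (∫ u in (0:ℝ)..θ, exp (-G u ω x)) +
      exp (4 * π * ω) * (∫ u in (0:ℝ)..2 * π, exp (-G u ω x)) =
      (∫ u in (0:ℝ)..θ, exp (-G u ω x)) +
        exp (4 * π * ω) * ∫ u in θ..2 * π, exp (-G u ω x) := by
    rw [← intervalIntegral.integral_interval_sub_left
      (intervalIntegrable_exp_neg_G ω x 0 (2 * π)) (intervalIntegrable_exp_neg_G ω x 0 θ)]
    ring
  have h₁ := intervalIntegral.intervalIntegral_pos_of_pos (intervalIntegrable_exp_neg_G ω x 0 θ)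
    (fun u => exp_pos (-G u ω x)) h₀
  have h₂ := intervalIntegral.intervalIntegral_pos_of_pos (intervalIntegrable_exp_neg_G ω x θ _)
    (fun u => exp_pos (-G u ω x)) h₂π
  rw [S, hsplit]
  positivity

lemma Z_pos (ω x : ℝ) : 0 < Z ω x :=
  intervalIntegral.intervalIntegral_pos_of_pos_on ((continuous_S ω x).intervalIntegrable _ _)
    (fun _ hθ => S_pos ω x hθ.1 hθ.2) (by positivity)

lemma S_periodic (ω x : ℝ) : Periodic (fun θ => S θ ω x) (2 * π) := fun θ => by
  simp only [S, integral_exp_neg_G_add_two_pi, G_add_two_pi]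
  rw [exp_add, exp_neg]
  field_simp
  ring

lemma S_neg (ω x θ : ℝ) : S (-θ) ω x = exp (4 * π * ω) * S θ (-ω) x := by
  simp only [S, integral_exp_neg_G_neg, integral_exp_neg_G_period ω x, G_neg]
  simp only [mul_neg, exp_neg]
  field_simp
  ring

lemma S_two_pi_sub (ω x θ : ℝ) : S (2 * π - θ) ω x = exp (4 * π * ω) * S θ (-ω) x := by
  rw [sub_eq_neg_add, ← S_neg]
  exact S_periodic ω x (-θ)

lemma Z_eq_exp_mul_Z_neg (ω x : ℝ) : Z ω x = exp (4 * π * ω) * Z (-ω) x := by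
  rw [Z, Z, ← integral_comp_two_pi_sub]
  simp only [S_two_pi_sub, intervalIntegral.integral_const_mul]

lemma integral_sin_mul_S_eq (ω x : ℝ) :
    (∫ θ in (0:ℝ)..2 * π, sin θ * S θ ω x) =
      -(exp (4 * π * ω) * ∫ θ in (0:ℝ)..2 * π, sin θ * S θ (-ω) x) := by
  rw [← integral_comp_two_pi_sub, ← intervalIntegral.integral_const_mul,
    ← intervalIntegral.integral_neg]
  congr 1 with θ
  rw [S_two_pi_sub, sin_two_pi_sub]
  ring

lemma integral_sin_mul_q (K r θ ω : ℝ) :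
    (∫ φ in (0:ℝ)..2 * π, sin φ * q K r (θ - φ) ω) =
      (sin θ * (∫ u in (0:ℝ)..2 * π, cos u * S u ω (2 * K * r)) -
        cos θ * ∫ u in (0:ℝ)..2 * π, sin u * S u ω (2 * K * r)) / Z ω (2 * K * r) := by
  simp only [q, mul_div_assoc', intervalIntegral.integral_div]
  rw [integral_sin_mul_comp_sub (continuous_S _ _) (S_periodic _ _)]

lemma Jconv_q {K ω₀ r : ℝ} (hfix : r = psiMu ω₀ (2 * K * r)) (θ : ℝ) :
    Jconv K ω₀ (q K r) θ = -(K * r) * sin θ := by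
  set x := 2 * K * r
  have hcos : (∫ u in (0:ℝ)..2 * π, cos u * S u (-ω₀) x) / Z (-ω₀) x +
      (∫ u in (0:ℝ)..2 * π, cos u * S u ω₀ x) / Z ω₀ x = 2 * r := by
    rw [hfix, psiMu]
    ring
  have hsin : (∫ u in (0:ℝ)..2 * π, sin u * S u (-ω₀) x) / Z (-ω₀) x +
      (∫ u in (0:ℝ)..2 * π, sin u * S u ω₀ x) / Z ω₀ x = 0 := by
    have := (Z_pos (-ω₀) x).ne'
    rw [integral_sin_mul_S_eq, Z_eq_exp_mul_Z_neg]
    field_simp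
    ring
  rw [Jconv, integral_sin_mul_q, integral_sin_mul_q]
  linear_combination (-(K / 2) * sin θ) * hcos + (K / 2 * cos θ) * hsin

lemma hasDerivAt_q (K r ω θ : ℝ) :
    HasDerivAt (fun u => q K r u ω)
      (((2 * ω - 2 * K * r * sin θ) * S θ ω (2 * K * r) + (1 - exp (4 * π * ω))) /
        Z ω (2 * K * r)) θ :=
  (hasDerivAt_S ω (2 * K * r) θ).div_const _

theorem stmt4_general (K ω₀ r : ℝ)
    (hfix : r = psiMu ω₀ (2 * K * r)) :
    ∀ θ : ℝ, ∀ ω ∈ ({-ω₀, ω₀} : Set ℝ),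
      (1 / 2) * deriv (fun u => q K r u ω) θ =
        q K r θ ω * (Jconv K ω₀ (q K r) θ + ω) + kap K r ω := by
  intro θ ω _
  have := (Z_pos ω (2 * K * r)).ne'
  rw [(hasDerivAt_q K r ω θ).deriv, Jconv_q hfix, q, kap]
  field_simp
  ring

/-- The integrated stationary equation. -/
theorem stmt4 (K ω₀ r : ℝ) (hK : 0 < K) (hω₀ : 0 < ω₀) (hr : 0 < r)
    (hfix : r = psiMu ω₀ (2 * K * r)) :
    ∀ θ : ℝ, ∀ ω ∈ ({-ω₀, ω₀} : Set ℝ),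
      (1 / 2) * deriv (fun u => q K r u ω) θ =
        q K r θ ω * (Jconv K ω₀ (q K r) θ + ω) + kap K r ω :=
  stmt4_general K ω₀ r hfix
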